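/- Let M_1, N_1 be n-outcome POVMs on ℂ^d and M_2, N_2 be n'-outcome POVMs on ℂ^{d'}. Let M_1 ⊗ M_2 denote the nn'-outcome POVM on ℂ^{dd'} with effects (M_1)_i ⊗ (M_2)_j (Kronecker products), and similarly for N_1 ⊗ N_2. Then d_av^m(M_1 ⊗ M_2, N_1 ⊗ N_2) ≤ d_av^m(M_1, N_1) + d_av^m(M_2, N_2). -/

import Mathlib

/-! Split `M₁ ⊗ M₂ - N₁ ⊗ N₂ = (M₁ - N₁) ⊗ M₂ + N₁ ⊗ (M₂ - N₂)`. Each summand of `d_av` is the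
Euclidean norm of the pair `(‖A‖_HS, re tr A)`, hence subadditive in `A`; and tensoring with a
positive semidefinite `B` scales it by at most `tr B`, because `‖A ⊗ B‖_HS = ‖A‖_HS ‖B‖_HS`,
`tr (A ⊗ B) = tr A tr B` and `‖B‖_HS ≤ tr B`. Summed over outcomes, the traces of the effects of a
POVM on `ℂ^d` add up to `d`, which the normalisation `1 / (2d)` absorbs. -/

open Matrix Kronecker ComplexOrder

/-- The Hilbert–Schmidt (Frobenius) norm of a complex matrix. -/
noncomputable def hsNorm {n : Type*} [Fintype n] (A : Matrix n n ℂ) : ℝ :=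
  Real.sqrt ((Matrix.trace (Aᴴ * A)).re)

/-- A POVM: a tuple of positive semidefinite effects summing to the identity. -/
def IsPOVM {n : Type*} [Fintype n] [DecidableEq n] {ι : Type*} [Fintype ι]
    (M : ι → Matrix n n ℂ) : Prop :=
  (∀ i, (M i).PosSemidef) ∧ ∑ i, M i = 1

/-- The average-case distance between POVMs on a `Fintype.card n`-dimensional space. -/
noncomputable def davM {n : Type*} [Fintype n] {ι : Type*} [Fintype ι]
    (M N : ι → Matrix n n ℂ) : ℝ :=
  (1 / (2 * (Fintype.card n : ℝ))) *
    ∑ i, Real.sqrt ((hsNorm (M i - N i)) ^ 2 + ((Matrix.trace (M i - N i)).re) ^ 2)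

open scoped Matrix.Norms.Frobenius

namespace Matrix

theorem frobenius_norm_sq {m n α : Type*} [Fintype m] [Fintype n] [SeminormedAddCommGroup α]
    (A : Matrix m n α) : ‖A‖ ^ 2 = ∑ i, ∑ j, ‖A i j‖ ^ 2 := by
  rw [frobenius_norm_def, ← Real.sqrt_eq_rpow, Real.sq_sqrt (by positivity)]
  simp only [Real.rpow_two]

theorem frobenius_norm_kronecker {l m n p α : Type*} [Fintype l] [Fintype m] [Fintype n]
    [Fintype p] [NormedDivisionRing α] (A : Matrix l m α) (B : Matrix n p α) :
    ‖A ⊗ₖ B‖ = ‖A‖ * ‖B‖ := by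
  refine (pow_left_inj₀ (norm_nonneg _) (by positivity) two_ne_zero).mp ?_
  simp only [mul_pow, frobenius_norm_sq, Fintype.sum_prod_type, kronecker_apply, norm_mul,
    Finset.sum_mul_sum]

theorem re_trace_conjTranspose_mul_self {m n : Type*} [Fintype m] [Fintype n]
    (A : Matrix m n ℂ) : (Aᴴ * A).trace.re = ‖A‖ ^ 2 := by
  simp only [frobenius_norm_sq, trace, diag, mul_apply, conjTranspose_apply, Complex.re_sum]
  rw [Finset.sum_comm]
  simp [Complex.sq_norm, Complex.normSq_apply]

theorem PosSemidef.frobenius_norm_le_re_trace {n : Type*} [Fintype n] {A : Matrix n n ℂ}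
    (hA : A.PosSemidef) : ‖A‖ ≤ A.trace.re := by
  classical
  open scoped MatrixOrder in
  obtain ⟨C, rfl⟩ := CStarAlgebra.nonneg_iff_eq_star_mul_self.mp hA.nonneg
  calc ‖star C * C‖ ≤ ‖Cᴴ‖ * ‖C‖ := frobenius_norm_mul _ _
    _ = (star C * C).trace.re := by
      rw [frobenius_norm_conjTranspose, star_eq_conjTranspose, re_trace_conjTranspose_mul_self, sq]

theorem PosSemidef.trace_eq_re {n : Type*} [Fintype n] {A : Matrix n n ℂ}
    (hA : A.PosSemidef) : A.trace = A.trace.re :=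
  Complex.eq_re_of_ofReal_le (r := 0) (by exact_mod_cast hA.trace_nonneg)

theorem kronecker_sub_kronecker {l m n p R : Type*} [Ring R] (A C : Matrix l m R)
    (B D : Matrix n p R) : A ⊗ₖ B - C ⊗ₖ D = (A - C) ⊗ₖ B + C ⊗ₖ (B - D) := by
  ext ⟨i, j⟩ ⟨i', j'⟩
  simp only [Matrix.sub_apply, Matrix.add_apply, kronecker_apply]
  rw [sub_mul, mul_sub]
  abel

end Matrix

theorem hsNorm_eq_frobenius_norm {n : Type*} [Fintype n] (A : Matrix n n ℂ) :
    hsNorm A = ‖A‖ := by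
  rw [hsNorm, re_trace_conjTranspose_mul_self, Real.sqrt_sq (norm_nonneg A)]

noncomputable def hsTraceNorm {n : Type*} [Fintype n] (A : Matrix n n ℂ) : ℝ :=
  √(hsNorm A ^ 2 + A.trace.re ^ 2)

theorem davM_eq_sum_hsTraceNorm {n ι : Type*} [Fintype n] [Fintype ι]
    (M N : ι → Matrix n n ℂ) :
    davM M N = 1 / (2 * (Fintype.card n : ℝ)) * ∑ i, hsTraceNorm (M i - N i) :=
  rfl

theorem hsTraceNorm_eq_norm {n : Type*} [Fintype n] (A : Matrix n n ℂ) :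
    hsTraceNorm A = ‖(‖A‖ : ℂ) + A.trace.re * Complex.I‖ := by
  rw [Complex.norm_add_mul_I, hsTraceNorm, hsNorm_eq_frobenius_norm]

theorem hsTraceNorm_nonneg {n : Type*} [Fintype n] (A : Matrix n n ℂ) : 0 ≤ hsTraceNorm A :=
  Real.sqrt_nonneg _

theorem hsTraceNorm_add_le {n : Type*} [Fintype n] (A B : Matrix n n ℂ) :
    hsTraceNorm (A + B) ≤ hsTraceNorm A + hsTraceNorm B := by
  simp only [hsTraceNorm_eq_norm]
  calc ‖(‖A + B‖ : ℂ) + (A + B).trace.re * Complex.I‖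
      ≤ ‖((‖A‖ + ‖B‖ : ℝ) : ℂ) + (A + B).trace.re * Complex.I‖ := by
        simp only [Complex.norm_add_mul_I]
        gcongr
        exact norm_add_le A B
    _ ≤ _ := by
        refine le_of_eq_of_le ?_ (norm_add_le _ _)
        simp only [trace_add, Complex.add_re]
        push_cast
        ring_nf

theorem hsTraceNorm_kronecker {m n : Type*} [Fintype m] [Fintype n] (A : Matrix m m ℂ)
    (B : Matrix n n ℂ) :
    hsTraceNorm (A ⊗ₖ B) = √((‖A‖ * ‖B‖) ^ 2 + ((A.trace * B.trace).re) ^ 2) := by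
  rw [hsTraceNorm, hsNorm_eq_frobenius_norm, frobenius_norm_kronecker, trace_kronecker]

theorem Real.sqrt_sq_mul_add_sq_mul_le {x y a t : ℝ} (ha : 0 ≤ a) (hat : a ≤ t) :
    √((x * a) ^ 2 + (y * t) ^ 2) ≤ t * √(x ^ 2 + y ^ 2) := by
  have ht : 0 ≤ t := ha.trans hat
  rw [← Real.sqrt_sq ht, ← Real.sqrt_mul (sq_nonneg t), Real.sqrt_sq ht]
  refine Real.sqrt_le_sqrt ?_
  have : a ^ 2 ≤ t ^ 2 := pow_le_pow_left₀ ha hat 2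
  nlinarith [sq_nonneg x]

theorem hsTraceNorm_kronecker_le_of_posSemidef_right {m n : Type*} [Fintype m] [Fintype n]
    (A : Matrix m m ℂ) {B : Matrix n n ℂ} (hB : B.PosSemidef) :
    hsTraceNorm (A ⊗ₖ B) ≤ B.trace.re * hsTraceNorm A := by
  rw [hsTraceNorm_kronecker, hB.trace_eq_re, Complex.re_mul_ofReal, Complex.ofReal_re,
    hsTraceNorm_eq_norm, Complex.norm_add_mul_I]
  exact Real.sqrt_sq_mul_add_sq_mul_le (norm_nonneg B) hB.frobenius_norm_le_re_trace

theorem hsTraceNorm_kronecker_le_of_posSemidef_left {m n : Type*} [Fintype m] [Fintype n]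
    {A : Matrix m m ℂ} (hA : A.PosSemidef) (B : Matrix n n ℂ) :
    hsTraceNorm (A ⊗ₖ B) ≤ A.trace.re * hsTraceNorm B := by
  rw [hsTraceNorm_kronecker, hA.trace_eq_re, Complex.re_ofReal_mul, Complex.ofReal_re,
    hsTraceNorm_eq_norm, Complex.norm_add_mul_I, mul_comm ‖A‖, mul_comm A.trace.re]
  exact Real.sqrt_sq_mul_add_sq_mul_le (norm_nonneg A) hA.frobenius_norm_le_re_trace

theorem hsTraceNorm_kronecker_sub_kronecker_le {m n : Type*} [Fintype m] [Fintype n]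
    (A : Matrix m m ℂ) {C : Matrix m m ℂ} {B : Matrix n n ℂ} (D : Matrix n n ℂ)
    (hC : C.PosSemidef) (hB : B.PosSemidef) :
    hsTraceNorm (A ⊗ₖ B - C ⊗ₖ D) ≤ B.trace.re * hsTraceNorm (A - C) +
      C.trace.re * hsTraceNorm (B - D) := by
  rw [kronecker_sub_kronecker]
  calc hsTraceNorm ((A - C) ⊗ₖ B + C ⊗ₖ (B - D))
      ≤ hsTraceNorm ((A - C) ⊗ₖ B) + hsTraceNorm (C ⊗ₖ (B - D)) := hsTraceNorm_add_le _ _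
    _ ≤ _ := add_le_add (hsTraceNorm_kronecker_le_of_posSemidef_right _ hB)
        (hsTraceNorm_kronecker_le_of_posSemidef_left hC _)

theorem IsPOVM.sum_re_trace {n ι : Type*} [Fintype n] [DecidableEq n] [Fintype ι]
    {M : ι → Matrix n n ℂ} (hM : IsPOVM M) : ∑ i, (M i).trace.re = Fintype.card n := by
  rw [← Complex.re_sum, ← trace_sum, hM.2, trace_one]
  simp

theorem one_div_two_mul_mul_le {a b S T X : ℝ} (ha : 0 ≤ a) (hb : 0 ≤ b) (hS : 0 ≤ S)
    (hT : 0 ≤ T) (h : X ≤ b * S + a * T) :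
    1 / (2 * (a * b)) * X ≤ 1 / (2 * a) * S + 1 / (2 * b) * T := by
  -- if `a = 0` or `b = 0` the left side is `0`, as `1 / 0 = 0`
  rcases ha.eq_or_lt with rfl | ha
  · simp only [zero_mul, mul_zero, div_zero]; positivity
  rcases hb.eq_or_lt with rfl | hb
  · simp only [zero_mul, mul_zero, div_zero]; positivity
  calc 1 / (2 * (a * b)) * X ≤ 1 / (2 * (a * b)) * (b * S + a * T) := by gcongr
    _ = 1 / (2 * a) * S + 1 / (2 * b) * T := by field_simp

theorem davM_kronecker_le {m m' ι κ : Type*} [Fintype m] [DecidableEq m] [Fintype m']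
    [DecidableEq m'] [Fintype ι] [Fintype κ] (M₁ N₁ : ι → Matrix m m ℂ)
    (M₂ N₂ : κ → Matrix m' m' ℂ) (hN₁ : IsPOVM N₁) (hM₂ : IsPOVM M₂) :
    davM (fun p : ι × κ => M₁ p.1 ⊗ₖ M₂ p.2) (fun p : ι × κ => N₁ p.1 ⊗ₖ N₂ p.2) ≤
      davM M₁ N₁ + davM M₂ N₂ := by
  set S₁ := ∑ i, hsTraceNorm (M₁ i - N₁ i)
  set S₂ := ∑ j, hsTraceNorm (M₂ j - N₂ j)
  have hsum : ∑ p : ι × κ, hsTraceNorm (M₁ p.1 ⊗ₖ M₂ p.2 - N₁ p.1 ⊗ₖ N₂ p.2) ≤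
      Fintype.card m' * S₁ + Fintype.card m * S₂ :=
    calc _ ≤ ∑ p : ι × κ, ((M₂ p.2).trace.re * hsTraceNorm (M₁ p.1 - N₁ p.1) +
            (N₁ p.1).trace.re * hsTraceNorm (M₂ p.2 - N₂ p.2)) :=
          Finset.sum_le_sum fun p _ =>
            hsTraceNorm_kronecker_sub_kronecker_le _ _ (hN₁.1 p.1) (hM₂.1 p.2)
      _ = (∑ j, (M₂ j).trace.re) * S₁ + (∑ i, (N₁ i).trace.re) * S₂ := by
          simp only [S₁, S₂, Fintype.sum_prod_type, Finset.sum_add_distrib, Finset.sum_mul_sum]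
          rw [Finset.sum_comm]
      _ = Fintype.card m' * S₁ + Fintype.card m * S₂ := by
          rw [hM₂.sum_re_trace, hN₁.sum_re_trace]
  rw [davM_eq_sum_hsTraceNorm, davM_eq_sum_hsTraceNorm, davM_eq_sum_hsTraceNorm,
    Fintype.card_prod, Nat.cast_mul]
  exact one_div_two_mul_mul_le (Nat.cast_nonneg _) (Nat.cast_nonneg _)
    (Finset.sum_nonneg fun i _ => hsTraceNorm_nonneg _)
    (Finset.sum_nonneg fun j _ => hsTraceNorm_nonneg _) hsum

theorem statement9_general (d d' n n' : ℕ)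
    (M₁ N₁ : Fin n → Matrix (Fin d) (Fin d) ℂ)
    (M₂ N₂ : Fin n' → Matrix (Fin d') (Fin d') ℂ)
    (hN₁ : IsPOVM N₁) (hM₂ : IsPOVM M₂) :
    davM (fun p : Fin n × Fin n' => M₁ p.1 ⊗ₖ M₂ p.2)
        (fun p : Fin n × Fin n' => N₁ p.1 ⊗ₖ N₂ p.2) ≤
      davM M₁ N₁ + davM M₂ N₂ :=
  davM_kronecker_le M₁ N₁ M₂ N₂ hN₁ hM₂

theorem statement9 (d d' n n' : ℕ)
    (M₁ N₁ : Fin n → Matrix (Fin d) (Fin d) ℂ)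
    (M₂ N₂ : Fin n' → Matrix (Fin d') (Fin d') ℂ)
    (hM₁ : IsPOVM M₁) (hN₁ : IsPOVM N₁) (hM₂ : IsPOVM M₂) (hN₂ : IsPOVM N₂) :
    davM (fun p : Fin n × Fin n' => M₁ p.1 ⊗ₖ M₂ p.2)
        (fun p : Fin n × Fin n' => N₁ p.1 ⊗ₖ N₂ p.2) ≤
      davM M₁ N₁ + davM M₂ N₂ :=
  statement9_general d d' n n' M₁ N₁ M₂ N₂ hN₁ hM₂
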